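/- Asymptotic dimensiongrad is a coarse invariant: if (X, 𝓔) and (Y, 𝓕) are coarsely equivalent coarse spaces, then asDg_𝓔(X) = asDg_𝓕(Y). -/
import Mathlib


/-- A (unitary, connected) coarse structure on a set `X`. -/
structure CoarseStruct (X : Type*) where
  sets : Set (Set (X × X))
  subset_mem : ∀ E ∈ sets, ∀ E' ⊆ E, E' ∈ sets
  union_mem : ∀ E ∈ sets, ∀ F ∈ sets, E ∪ F ∈ sets
  inv_mem : ∀ E ∈ sets, Prod.swap '' E ∈ sets
  comp_mem : ∀ E ∈ sets, ∀ F ∈ sets,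
    {p : X × X | ∃ z : X, (p.1, z) ∈ F ∧ (z, p.2) ∈ E} ∈ sets
  diag_mem : {p : X × X | p.1 = p.2} ∈ sets
  connected : ∀ x y : X, ({(x, y)} : Set (X × X)) ∈ sets

/-- `E(A) = {y : ∃ x ∈ A, (y, x) ∈ E}`. -/
def img {X : Type*} (E : Set (X × X)) (A : Set X) : Set X :=
  {y | ∃ x ∈ A, (y, x) ∈ E}

/-- The AS.R associated to a coarse structure. -/
def lamC {X : Type*} (𝓔 : CoarseStruct X) (A B : Set X) : Prop :=
  ∃ E ∈ 𝓔.sets, A ⊆ img E B ∧ B ⊆ img E A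

/-- Bounded subsets of a coarse space. -/
def BddC {X : Type*} (𝓔 : CoarseStruct X) (B : Set X) : Prop :=
  B ×ˢ B ∈ 𝓔.sets

/-- Asymptotic disjointness in the AS.R associated to a coarse structure. -/
def AsympDisjC {X : Type*} (𝓔 : CoarseStruct X) (A B : Set X) : Prop :=
  ∀ L₁ ⊆ A, ∀ L₂ ⊆ B, lamC 𝓔 L₁ L₂ → BddC 𝓔 L₁ ∧ BddC 𝓔 L₂

/-- `g : ℕ → X` is an `E`-chain of length `n`. -/
def IsChain' {X : Type*} (E : Set (X × X)) (n : ℕ) (g : ℕ → X) : Prop :=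
  ∀ i < n, (g i, g (i + 1)) ∈ E

/-- `C` is an asymptotic cut between the asymptotically disjoint sets `A` and `B`:
`C` is asymptotically disjoint from both and for each entourage `E` there is an
entourage `F` such that every `E`-chain from `A` to `B` meets `F(C)`. -/
def AsympCutC {X : Type*} (𝓔 : CoarseStruct X) (A B C : Set X) : Prop :=
  AsympDisjC 𝓔 C A ∧ AsympDisjC 𝓔 C B ∧
  ∀ E ∈ 𝓔.sets, ∃ F ∈ 𝓔.sets, ∀ (n : ℕ) (g : ℕ → X),
    g 0 ∈ A → g n ∈ B → IsChain' E n g → ∃ i ≤ n, g i ∈ img F C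

/-- `C` is a large scale separator between the asymptotically disjoint sets
`A` and `B`. -/
def LargeScaleSepC {X : Type*} (𝓔 : CoarseStruct X) (A B C : Set X) : Prop :=
  AsympDisjC 𝓔 C A ∧ AsympDisjC 𝓔 C B ∧
  ∃ X₁ X₂ : Set X, X₁ ∪ X₂ = Set.univ ∧
    AsympDisjC 𝓔 X₁ A ∧ AsympDisjC 𝓔 X₂ B ∧
    ∀ L₁ ⊆ X₁, ∀ L₂ ⊆ X₂, lamC 𝓔 L₁ L₂ → ∃ L ⊆ C, lamC 𝓔 L₁ L

/-- A coarse map between coarse spaces: entourages map to entourages and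
preimages of bounded sets are bounded. -/
def CoarseMap {X Y : Type*} (𝓔 : CoarseStruct X) (𝓕 : CoarseStruct Y)
    (f : X → Y) : Prop :=
  (∀ E ∈ 𝓔.sets, (fun p : X × X => (f p.1, f p.2)) '' E ∈ 𝓕.sets) ∧
  ∀ B : Set Y, BddC 𝓕 B → BddC 𝓔 (f ⁻¹' B)

/-- `g` is a coarse inverse of `f`. -/
def CoarseInverse {X Y : Type*} (𝓔 : CoarseStruct X) (𝓕 : CoarseStruct Y)
    (f : X → Y) (g : Y → X) : Prop :=
  {p : X × X | ∃ x : X, p = (g (f x), x)} ∈ 𝓔.sets ∧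
  {p : Y × Y | ∃ y : Y, p = (f (g y), y)} ∈ 𝓕.sets

/-- `f` is a coarse equivalence. -/
def CoarseEquiv {X Y : Type*} (𝓔 : CoarseStruct X) (𝓕 : CoarseStruct Y)
    (f : X → Y) : Prop :=
  CoarseMap 𝓔 𝓕 f ∧ ∃ g : Y → X, CoarseMap 𝓕 𝓔 g ∧ CoarseInverse 𝓔 𝓕 f g

/-- An asymptotic cut relative to a subspace `Y` (with its subspace coarse
structure): only chains lying in `Y` are considered. -/
def AsympCutIn {X : Type*} (𝓔 : CoarseStruct X) (Y A B C : Set X) : Prop :=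
  AsympDisjC 𝓔 C A ∧ AsympDisjC 𝓔 C B ∧
  ∀ E ∈ 𝓔.sets, ∃ F ∈ 𝓔.sets, ∀ (n : ℕ) (g : ℕ → X), (∀ i ≤ n, g i ∈ Y) →
    g 0 ∈ A → g n ∈ B → IsChain' E n g → ∃ i ≤ n, g i ∈ img F C

/-- `asDgLe 𝓔 n Y` means that the asymptotic dimensiongrad of the subspace `Y`
is at most `n - 1`: `asDgLe 𝓔 0 Y` says every pair of asymptotically disjoint
subsets of `Y` has a bounded (i.e. dimensiongrad `-1`) asymptotic cut in `Y`,
and inductively for larger `n`. -/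
def asDgLe {X : Type*} (𝓔 : CoarseStruct X) : ℕ → Set X → Prop
  | 0, Y => ∀ A B : Set X, A ⊆ Y → B ⊆ Y → AsympDisjC 𝓔 A B →
      ∃ C ⊆ Y, AsympCutIn 𝓔 Y A B C ∧ BddC 𝓔 C
  | n + 1, Y => ∀ A B : Set X, A ⊆ Y → B ⊆ Y → AsympDisjC 𝓔 A B →
      ∃ C ⊆ Y, AsympCutIn 𝓔 Y A B C ∧ asDgLe 𝓔 n C

section Helpers

variable {X Y : Type*}

/-- The "swap" of an entourage, written as a set comprehension. -/
def symb (E : Set (X × X)) : Set (X × X) := {p | (p.2, p.1) ∈ E}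

lemma symb_mem (𝓔 : CoarseStruct X) {E : Set (X × X)} (hE : E ∈ 𝓔.sets) :
    symb E ∈ 𝓔.sets := by
  have h := 𝓔.inv_mem E hE
  have heq : Prod.swap '' E = symb E := by
    ext p
    constructor
    · rintro ⟨q, hq, rfl⟩; exact hq
    · intro hp; exact ⟨(p.2, p.1), hp, rfl⟩
  rwa [heq] at h

/-- Composition of entourages. -/
def relC (R S : Set (X × X)) : Set (X × X) :=
  {p | ∃ z, (p.1, z) ∈ R ∧ (z, p.2) ∈ S}

lemma relC_mem (𝓔 : CoarseStruct X) {R S : Set (X × X)}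
    (hR : R ∈ 𝓔.sets) (hS : S ∈ 𝓔.sets) : relC R S ∈ 𝓔.sets :=
  𝓔.comp_mem S hS R hR

lemma img_mono {E E' : Set (X × X)} {A : Set X} (h : E ⊆ E') :
    img E A ⊆ img E' A := by
  rintro y ⟨x, hx, hp⟩
  exact ⟨x, hx, h hp⟩

lemma bdd_mono (𝓔 : CoarseStruct X) {A B : Set X} (hAB : A ⊆ B)
    (hB : BddC 𝓔 B) : BddC 𝓔 A :=
  𝓔.subset_mem _ hB _ (Set.prod_mono hAB hAB)

lemma bdd_img (𝓔 : CoarseStruct X) {E : Set (X × X)} {A B : Set X}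
    (hE : E ∈ 𝓔.sets) (hB : BddC 𝓔 B) (hA : A ⊆ img E B) : BddC 𝓔 A := by
  apply 𝓔.subset_mem _ (relC_mem 𝓔 (relC_mem 𝓔 hE hB) (symb_mem 𝓔 hE))
  rintro ⟨a, a'⟩ ⟨ha, ha'⟩
  obtain ⟨b, hb, hab⟩ := hA ha
  obtain ⟨b', hb', hab'⟩ := hA ha'
  exact ⟨b', ⟨b, hab, hb, hb'⟩, hab'⟩

lemma lam_symm {𝓔 : CoarseStruct X} {A B : Set X} (h : lamC 𝓔 A B) :
    lamC 𝓔 B A := by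
  obtain ⟨E, hE, h1, h2⟩ := h
  exact ⟨E, hE, h2, h1⟩

lemma lam_trans {𝓔 : CoarseStruct X} {A B C : Set X}
    (h1 : lamC 𝓔 A B) (h2 : lamC 𝓔 B C) : lamC 𝓔 A C := by
  obtain ⟨E, hE, hAB, hBA⟩ := h1
  obtain ⟨F, hF, hBC, hCB⟩ := h2
  refine ⟨relC E F ∪ relC F E,
    𝓔.union_mem _ (relC_mem _ hE hF) _ (relC_mem _ hF hE), ?_, ?_⟩
  · intro a ha
    obtain ⟨b, hb, hab⟩ := hAB ha
    obtain ⟨c, hc, hbc⟩ := hBC hb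
    exact ⟨c, hc, Or.inl ⟨b, hab, hbc⟩⟩
  · intro c hc
    obtain ⟨b, hb, hcb⟩ := hCB hc
    obtain ⟨a, ha, hba⟩ := hBA hb
    exact ⟨a, ha, Or.inr ⟨b, hcb, hba⟩⟩

lemma asympDisj_close {𝓔 : CoarseStruct X} {A B A' B' : Set X}
    {W₁ W₂ : Set (X × X)} (h : AsympDisjC 𝓔 A B)
    (hW₁ : W₁ ∈ 𝓔.sets) (hW₂ : W₂ ∈ 𝓔.sets)
    (hA : A' ⊆ img W₁ A) (hB : B' ⊆ img W₂ B) : AsympDisjC 𝓔 A' B' := by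
  intro L₁ hL₁ L₂ hL₂ hlam
  set M₁ : Set X := {a | a ∈ A ∧ ∃ p ∈ L₁, (p, a) ∈ W₁} with hM₁def
  set M₂ : Set X := {b | b ∈ B ∧ ∃ p ∈ L₂, (p, b) ∈ W₂} with hM₂def
  have hL₁M : L₁ ⊆ img W₁ M₁ := by
    intro p hp
    obtain ⟨a, ha, hpa⟩ := hA (hL₁ hp)
    exact ⟨a, ⟨ha, p, hp, hpa⟩, hpa⟩
  have hL₂M : L₂ ⊆ img W₂ M₂ := by
    intro p hp
    obtain ⟨b, hb, hpb⟩ := hB (hL₂ hp)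
    exact ⟨b, ⟨hb, p, hp, hpb⟩, hpb⟩
  have hM₁L : M₁ ⊆ img (symb W₁) L₁ := by
    rintro a ⟨ha, p, hp, hpa⟩
    exact ⟨p, hp, hpa⟩
  have hM₂L : M₂ ⊆ img (symb W₂) L₂ := by
    rintro b ⟨hb, p, hp, hpb⟩
    exact ⟨p, hp, hpb⟩
  have lam₁ : lamC 𝓔 L₁ M₁ :=
    ⟨W₁ ∪ symb W₁, 𝓔.union_mem _ hW₁ _ (symb_mem 𝓔 hW₁),
      fun p hp => img_mono Set.subset_union_left (hL₁M hp),
      fun a ha => img_mono Set.subset_union_right (hM₁L ha)⟩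
  have lam₂ : lamC 𝓔 L₂ M₂ :=
    ⟨W₂ ∪ symb W₂, 𝓔.union_mem _ hW₂ _ (symb_mem 𝓔 hW₂),
      fun p hp => img_mono Set.subset_union_left (hL₂M hp),
      fun b hb => img_mono Set.subset_union_right (hM₂L hb)⟩
  have hMM : lamC 𝓔 M₁ M₂ := lam_trans (lam_symm lam₁) (lam_trans hlam lam₂)
  obtain ⟨hb₁, hb₂⟩ := h M₁ (fun a ha => ha.1) M₂ (fun b hb => hb.1) hMM
  exact ⟨bdd_img 𝓔 hW₁ hb₁ hL₁M, bdd_img 𝓔 hW₂ hb₂ hL₂M⟩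

lemma lam_image {𝓔 : CoarseStruct X} {𝓕 : CoarseStruct Y} {f : X → Y}
    (hfm : CoarseMap 𝓔 𝓕 f) {P Q : Set X} (h : lamC 𝓔 P Q) :
    lamC 𝓕 (f '' P) (f '' Q) := by
  obtain ⟨E, hE, hPQ, hQP⟩ := h
  refine ⟨_, hfm.1 E hE, ?_, ?_⟩
  · rintro y ⟨p, hp, rfl⟩
    obtain ⟨q, hq, hpq⟩ := hPQ hp
    exact ⟨f q, ⟨q, hq, rfl⟩, ⟨(p, q), hpq, rfl⟩⟩
  · rintro y ⟨q, hq, rfl⟩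
    obtain ⟨p, hp, hqp⟩ := hQP hq
    exact ⟨f p, ⟨p, hp, rfl⟩, ⟨(q, p), hqp, rfl⟩⟩

lemma bdd_image {𝓔 : CoarseStruct X} {𝓕 : CoarseStruct Y} {f : X → Y}
    (hfm : CoarseMap 𝓔 𝓕 f) {P : Set X} (h : BddC 𝓔 P) : BddC 𝓕 (f '' P) := by
  apply 𝓕.subset_mem _ (hfm.1 _ h)
  rintro ⟨y₁, y₂⟩ ⟨⟨p₁, hp₁, rfl⟩, ⟨p₂, hp₂, rfl⟩⟩
  exact ⟨(p₁, p₂), ⟨hp₁, hp₂⟩, rfl⟩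

lemma bdd_pull {𝓔 : CoarseStruct X} {𝓕 : CoarseStruct Y} {f : X → Y}
    (hfm : CoarseMap 𝓔 𝓕 f) {L : Set X} (h : BddC 𝓕 (f '' L)) : BddC 𝓔 L :=
  bdd_mono 𝓔 (Set.subset_preimage_image f L) (hfm.2 _ h)

lemma pull_mem {𝓔 : CoarseStruct X} {𝓕 : CoarseStruct Y} {f : X → Y}
    (hf : CoarseEquiv 𝓔 𝓕 f) {D : Set (Y × Y)} (hD : D ∈ 𝓕.sets) :
    {p : X × X | (f p.1, f p.2) ∈ D} ∈ 𝓔.sets := by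
  obtain ⟨hfm, g, hgm, hEf, hEg⟩ := hf
  apply 𝓔.subset_mem _ (relC_mem 𝓔 (symb_mem 𝓔 hEf) (relC_mem 𝓔 (hgm.1 D hD) hEf))
  rintro ⟨x, x'⟩ hx
  exact ⟨g (f x), ⟨x, rfl⟩, g (f x'), ⟨(f x, f x'), hx, rfl⟩, ⟨x', rfl⟩⟩

lemma lam_pull {𝓔 : CoarseStruct X} {𝓕 : CoarseStruct Y} {f : X → Y}
    (hf : CoarseEquiv 𝓔 𝓕 f) {P Q : Set X}
    (h : lamC 𝓕 (f '' P) (f '' Q)) : lamC 𝓔 P Q := by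
  obtain ⟨D, hD, h₁, h₂⟩ := h
  refine ⟨_, pull_mem hf hD, ?_, ?_⟩
  · intro p hp
    obtain ⟨y, ⟨q, hq, rfl⟩, hpy⟩ := h₁ ⟨p, hp, rfl⟩
    exact ⟨q, hq, hpy⟩
  · intro q hq
    obtain ⟨y, ⟨p, hp, rfl⟩, hqy⟩ := h₂ ⟨q, hq, rfl⟩
    exact ⟨p, hp, hqy⟩

lemma asympDisj_image {𝓔 : CoarseStruct X} {𝓕 : CoarseStruct Y} {f : X → Y}
    (hf : CoarseEquiv 𝓔 𝓕 f) {P Q : Set X}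
    (h : AsympDisjC 𝓔 P Q) : AsympDisjC 𝓕 (f '' P) (f '' Q) := by
  intro L₁ hL₁ L₂ hL₂ hlam
  set P₁ : Set X := P ∩ f ⁻¹' L₁ with hP₁def
  set Q₁ : Set X := Q ∩ f ⁻¹' L₂ with hQ₁def
  have hfP₁ : f '' P₁ = L₁ := by
    apply Set.Subset.antisymm
    · rintro y ⟨p, ⟨_, hp⟩, rfl⟩; exact hp
    · intro y hy
      obtain ⟨p, hp, rfl⟩ := hL₁ hy
      exact ⟨p, ⟨hp, hy⟩, rfl⟩
  have hfQ₁ : f '' Q₁ = L₂ := by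
    apply Set.Subset.antisymm
    · rintro y ⟨q, ⟨_, hq⟩, rfl⟩; exact hq
    · intro y hy
      obtain ⟨q, hq, rfl⟩ := hL₂ hy
      exact ⟨q, ⟨hq, hy⟩, rfl⟩
  have hlam' : lamC 𝓔 P₁ Q₁ := lam_pull hf (by rwa [hfP₁, hfQ₁])
  obtain ⟨h₁, h₂⟩ := h P₁ Set.inter_subset_left Q₁ Set.inter_subset_left hlam'
  exact ⟨hfP₁ ▸ bdd_image hf.1 h₁, hfQ₁ ▸ bdd_image hf.1 h₂⟩

lemma asympDisj_pull {𝓔 : CoarseStruct X} {𝓕 : CoarseStruct Y} {f : X → Y}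
    (hf : CoarseEquiv 𝓔 𝓕 f) {P Q : Set X}
    (h : AsympDisjC 𝓕 (f '' P) (f '' Q)) : AsympDisjC 𝓔 P Q := by
  intro L₁ hL₁ L₂ hL₂ hlam
  obtain ⟨h₁, h₂⟩ := h (f '' L₁) (Set.image_mono hL₁) (f '' L₂)
    (Set.image_mono hL₂) (lam_image hf.1 hlam)
  exact ⟨bdd_pull hf.1 h₁, bdd_pull hf.1 h₂⟩

/-- The key construction: transferring asymptotically disjoint pairs backwards
along a coarse equivalence, and cuts forwards. -/
lemma cutTransfer {X Y : Type*} {𝓔 : CoarseStruct X} {𝓕 : CoarseStruct Y} {f : X → Y}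
    (hf : CoarseEquiv 𝓔 𝓕 f) {S : Set X} {T : Set Y} {W : Set (Y × Y)}
    (hW : W ∈ 𝓕.sets) (hWs : ∀ p ∈ W, (p.2, p.1) ∈ W)
    (hST : f '' S ⊆ img W T) (hTS : T ⊆ img W (f '' S))
    {A B : Set Y} (hA : A ⊆ T) (hB : B ⊆ T) (hAB : AsympDisjC 𝓕 A B) :
    ∃ A' B' : Set X, A' ⊆ S ∧ B' ⊆ S ∧ AsympDisjC 𝓔 A' B' ∧
      ∀ C' ⊆ S, AsympCutIn 𝓔 S A' B' C' →
        ∃ C ⊆ T, AsympCutIn 𝓕 T A B C ∧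
          f '' C' ⊆ img W C ∧ C ⊆ img W (f '' C') := by
  classical
  set A' : Set X := {s | s ∈ S ∧ ∃ a ∈ A, (a, f s) ∈ W} with hA'def
  set B' : Set X := {s | s ∈ S ∧ ∃ b ∈ B, (b, f s) ∈ W} with hB'def
  have hA'S : A' ⊆ S := fun s hs => hs.1
  have hB'S : B' ⊆ S := fun s hs => hs.1
  have hAA' : A ⊆ img W (f '' A') := by
    intro a ha
    obtain ⟨y, ⟨s, hsS, rfl⟩, haw⟩ := hTS (hA ha)
    exact ⟨f s, ⟨s, ⟨hsS, a, ha, haw⟩, rfl⟩, haw⟩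
  have hBB' : B ⊆ img W (f '' B') := by
    intro b hb
    obtain ⟨y, ⟨s, hsS, rfl⟩, hbw⟩ := hTS (hB hb)
    exact ⟨f s, ⟨s, ⟨hsS, b, hb, hbw⟩, rfl⟩, hbw⟩
  have hA'A : f '' A' ⊆ img W A := by
    rintro y ⟨s, ⟨hsS, a, ha, haw⟩, rfl⟩
    exact ⟨a, ha, hWs _ haw⟩
  have hB'B : f '' B' ⊆ img W B := by
    rintro y ⟨s, ⟨hsS, b, hb, hbw⟩, rfl⟩
    exact ⟨b, hb, hWs _ hbw⟩
  have hdisj : AsympDisjC 𝓔 A' B' :=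
    asympDisj_pull hf (asympDisj_close hAB hW hW hA'A hB'B)
  refine ⟨A', B', hA'S, hB'S, hdisj, ?_⟩
  intro C' hC'S hcut
  obtain ⟨hCA', hCB', hchain⟩ := hcut
  set C : Set Y := {t | t ∈ T ∧ ∃ c ∈ C', (f c, t) ∈ W} with hCdef
  have hCT : C ⊆ T := fun t ht => ht.1
  have hC'C : f '' C' ⊆ img W C := by
    rintro y ⟨c, hc, rfl⟩
    obtain ⟨t, htT, hw⟩ := hST ⟨c, hC'S hc, rfl⟩
    exact ⟨t, ⟨htT, c, hc, hw⟩, hw⟩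
  have hCC' : C ⊆ img W (f '' C') := by
    rintro t ⟨htT, c, hc, hw⟩
    exact ⟨f c, ⟨c, hc, rfl⟩, hWs _ hw⟩
  refine ⟨C, hCT, ⟨?_, ?_, ?_⟩, hC'C, hCC'⟩
  · exact asympDisj_close (asympDisj_image hf hCA') hW hW hCC' hAA'
  · exact asympDisj_close (asympDisj_image hf hCB') hW hW hCC' hBB'
  · intro E hE
    have hDm : relC W (relC E W) ∈ 𝓕.sets := relC_mem 𝓕 hW (relC_mem 𝓕 hE hW)
    obtain ⟨F', hF', hFchain⟩ := hchain _ (pull_mem hf hDm)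
    refine ⟨relC W (relC ((fun p : X × X => (f p.1, f p.2)) '' F') W),
      relC_mem 𝓕 hW (relC_mem 𝓕 (hf.1.1 F' hF') hW), ?_⟩
    intro n gc hgT hg0 hgn hch
    have hsel : ∀ i, i ≤ n → ∃ s, s ∈ S ∧ (gc i, f s) ∈ W := by
      intro i hi
      obtain ⟨y, ⟨s, hsS, rfl⟩, hw⟩ := hTS (hgT i hi)
      exact ⟨s, hsS, hw⟩
    have hsel' : ∀ i, ∃ s, s ∈ S ∧ (i ≤ n → (gc i, f s) ∈ W) := by
      intro i
      by_cases hi : i ≤ n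
      · obtain ⟨s, h1, h2⟩ := hsel i hi
        exact ⟨s, h1, fun _ => h2⟩
      · obtain ⟨s, h1, _⟩ := hsel 0 (Nat.zero_le n)
        exact ⟨s, h1, fun h => absurd h hi⟩
    choose h hhS hhW using hsel'
    have h0A' : h 0 ∈ A' := ⟨hhS 0, gc 0, hg0, hhW 0 (Nat.zero_le n)⟩
    have hnB' : h n ∈ B' := ⟨hhS n, gc n, hgn, hhW n le_rfl⟩
    have hhchain : IsChain' {p : X × X | (f p.1, f p.2) ∈ relC W (relC E W)} n h := by
      intro i hi
      exact ⟨gc i, hWs _ (hhW i (le_of_lt hi)), gc (i + 1), hch i hi, hhW (i + 1) hi⟩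
    obtain ⟨i, hin, c, hcC', hic⟩ := hFchain n h (fun i _ => hhS i) h0A' hnB' hhchain
    obtain ⟨t, htT, htw⟩ := hST ⟨c, hC'S hcC', rfl⟩
    refine ⟨i, hin, t, ⟨htT, c, hcC', htw⟩, ?_⟩
    exact ⟨f (h i), hhW i hin, f c, ⟨(h i, c), hic, rfl⟩, htw⟩

lemma transfer {X Y : Type*} {𝓔 : CoarseStruct X} {𝓕 : CoarseStruct Y} {f : X → Y}
    (hf : CoarseEquiv 𝓔 𝓕 f) :
    ∀ (n : ℕ) (S : Set X) (T : Set Y),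
      lamC 𝓕 (f '' S) T → asDgLe 𝓔 n S → asDgLe 𝓕 n T := by
  intro n
  induction n with
  | zero =>
    intro S T hST hS A B hA hB hAB
    obtain ⟨E, hE, h1, h2⟩ := hST
    have hW : E ∪ symb E ∈ 𝓕.sets := 𝓕.union_mem E hE _ (symb_mem 𝓕 hE)
    have hWs : ∀ p ∈ E ∪ symb E, (p.2, p.1) ∈ E ∪ symb E := by
      rintro p (hp | hp)
      · exact Or.inr hp
      · exact Or.inl hp
    have hST' : f '' S ⊆ img (E ∪ symb E) T :=
      fun y hy => img_mono Set.subset_union_left (h1 hy)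
    have hTS' : T ⊆ img (E ∪ symb E) (f '' S) :=
      fun t ht => img_mono Set.subset_union_left (h2 ht)
    obtain ⟨A', B', hA'S, hB'S, hdisj, hcore⟩ :=
      cutTransfer hf hW hWs hST' hTS' hA hB hAB
    obtain ⟨C', hC'S, hcut, hbdd⟩ := hS A' B' hA'S hB'S hdisj
    obtain ⟨C, hCT, hcutC, _, hCC'⟩ := hcore C' hC'S hcut
    exact ⟨C, hCT, hcutC, bdd_img 𝓕 hW (bdd_image hf.1 hbdd) hCC'⟩
  | succ n ih =>
    intro S T hST hS A B hA hB hAB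
    obtain ⟨E, hE, h1, h2⟩ := hST
    have hW : E ∪ symb E ∈ 𝓕.sets := 𝓕.union_mem E hE _ (symb_mem 𝓕 hE)
    have hWs : ∀ p ∈ E ∪ symb E, (p.2, p.1) ∈ E ∪ symb E := by
      rintro p (hp | hp)
      · exact Or.inr hp
      · exact Or.inl hp
    have hST' : f '' S ⊆ img (E ∪ symb E) T :=
      fun y hy => img_mono Set.subset_union_left (h1 hy)
    have hTS' : T ⊆ img (E ∪ symb E) (f '' S) :=
      fun t ht => img_mono Set.subset_union_left (h2 ht)
    obtain ⟨A', B', hA'S, hB'S, hdisj, hcore⟩ :=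
      cutTransfer hf hW hWs hST' hTS' hA hB hAB
    obtain ⟨C', hC'S, hcut, hrec⟩ := hS A' B' hA'S hB'S hdisj
    obtain ⟨C, hCT, hcutC, hC'C, hCC'⟩ := hcore C' hC'S hcut
    exact ⟨C, hCT, hcutC, ih C' C ⟨E ∪ symb E, hW, hC'C, hCC'⟩ hrec⟩

end Helpers

/-- Asymptotic dimensiongrad is a coarse invariant: coarsely equivalent coarse
spaces have the same asymptotic dimensiongrad. -/
theorem asDg_coarse_invariant {X Y : Type*} (𝓔 : CoarseStruct X)
    (𝓕 : CoarseStruct Y) (f : X → Y) (hf : CoarseEquiv 𝓔 𝓕 f) :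
    (BddC 𝓔 Set.univ ↔ BddC 𝓕 Set.univ) ∧
      ∀ n : ℕ, (asDgLe 𝓔 n Set.univ ↔ asDgLe 𝓕 n Set.univ) := by
  obtain ⟨hfm, g, hgm, hEf, hEg⟩ := hf
  have hf' : CoarseEquiv 𝓔 𝓕 f := ⟨hfm, g, hgm, hEf, hEg⟩
  have hg' : CoarseEquiv 𝓕 𝓔 g := ⟨hgm, f, hfm, hEg, hEf⟩
  have hfu : lamC 𝓕 (f '' Set.univ) Set.univ := by
    refine ⟨{p : Y × Y | p.1 = p.2} ∪ symb {p : Y × Y | ∃ y, p = (f (g y), y)},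
      𝓕.union_mem _ 𝓕.diag_mem _ (symb_mem 𝓕 hEg), ?_, ?_⟩
    · rintro y ⟨x, -, rfl⟩
      exact ⟨f x, trivial, Or.inl rfl⟩
    · intro y _
      exact ⟨f (g y), ⟨g y, trivial, rfl⟩, Or.inr ⟨y, rfl⟩⟩
  have hgu : lamC 𝓔 (g '' Set.univ) Set.univ := by
    refine ⟨{p : X × X | p.1 = p.2} ∪ symb {p : X × X | ∃ x, p = (g (f x), x)},
      𝓔.union_mem _ 𝓔.diag_mem _ (symb_mem 𝓔 hEf), ?_, ?_⟩
    · rintro x ⟨y, -, rfl⟩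
      exact ⟨g y, trivial, Or.inl rfl⟩
    · intro x _
      exact ⟨g (f x), ⟨f x, trivial, rfl⟩, Or.inr ⟨x, rfl⟩⟩
  constructor
  · constructor
    · intro h
      obtain ⟨E, hE, _, h2⟩ := hfu
      exact bdd_img 𝓕 hE (bdd_image hfm h) h2
    · intro h
      obtain ⟨E, hE, _, h2⟩ := hgu
      exact bdd_img 𝓔 hE (bdd_image hgm h) h2
  · intro n
    exact ⟨fun h => transfer hf' n Set.univ Set.univ hfu h,
      fun h => transfer hg' n Set.univ Set.univ hgu h⟩
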